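/- arXiv:2110.02716 — 2 statements merged into one kernel-verified Lean document; each statement's English description precedes it below -/
import Mathlib

section
/- Let μ and ν be probability measures on ℝ with μ atomless, with CDFs F and G respectively, and let G⁻¹(u) = inf{z : G(z) > u}. Then the map T = G⁻¹ ∘ F satisfies T_#μ = ν. -/
/-! For an atomless `μ`, `F_#μ` is Lebesgue measure on `(0, 1)`, and `G⁻¹` pushes Lebesgue
measure on `(0, 1)` to `ν` because on `(0, 1)` the event `G⁻¹ u ≤ x` lies between `u < G x`
and `u ≤ G x`. The first fact reduces to the second: `μ` is the image of Lebesgue measure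
under `F⁻¹`, and `F ∘ F⁻¹ = id` on `(0, 1)` since `F` is continuous. -/

open MeasureTheory Set Filter Topology ProbabilityTheory

/-- The generalized inverse `G⁻¹` of a CDF `G`. -/
noncomputable def quantile (f : ℝ → ℝ) (u : ℝ) : ℝ :=
  sInf {z | u < f z}

section Quantile

variable {f : StieltjesFunction ℝ} {u x : ℝ}

lemma bddBelow_setOf_lt_of_tendsto_atBot (hf0 : Tendsto f atBot (𝓝 0)) (hu : 0 < u) :
    BddBelow {z | u < f z} := by
  obtain ⟨z₀, hz₀⟩ := eventually_atBot.1 (hf0.eventually_lt_const hu)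
  exact ⟨z₀, fun z hz => le_of_not_gt fun hlt => (hz₀ z hlt.le).not_gt hz⟩

lemma nonempty_setOf_lt_of_tendsto_atTop (hf1 : Tendsto f atTop (𝓝 1)) (hu : u < 1) :
    {z | u < f z}.Nonempty :=
  (hf1.eventually_const_lt hu).exists

lemma quantile_le_of_lt (hf0 : Tendsto f atBot (𝓝 0)) (hu : 0 < u) (h : u < f x) :
    quantile f u ≤ x :=
  csInf_le (bddBelow_setOf_lt_of_tendsto_atBot hf0 hu) h

lemma le_of_quantile_le (hf1 : Tendsto f atTop (𝓝 1)) (hu : u < 1) (h : quantile f u ≤ x) :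
    u ≤ f x := by
  refine ge_of_tendsto ((f.right_continuous x).mono Ioi_subset_Ici_self) ?_
  filter_upwards [self_mem_nhdsWithin] with y (hy : x < y)
  obtain ⟨z, hz, hzy⟩ :=
    exists_lt_of_csInf_lt (nonempty_setOf_lt_of_tendsto_atTop hf1 hu) (h.trans_lt hy)
  exact hz.le.trans (f.mono hzy.le)

lemma monotoneOn_quantile (hf0 : Tendsto f atBot (𝓝 0)) (hf1 : Tendsto f atTop (𝓝 1)) :
    MonotoneOn (quantile f) (Ioo 0 1) := fun _ hu _ hv huv =>
  csInf_le_csInf (bddBelow_setOf_lt_of_tendsto_atBot hf0 hu.1)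
    (nonempty_setOf_lt_of_tendsto_atTop hf1 hv.2) fun _ hz => huv.trans_lt hz

/-- `f ≤ u` below the infimum of `{z | u < f z}`, hence at it by left continuity. -/
lemma apply_quantile (hf : Continuous f) (hf0 : Tendsto f atBot (𝓝 0))
    (hf1 : Tendsto f atTop (𝓝 1)) (hu : u ∈ Ioo 0 1) : f (quantile f u) = u := by
  refine le_antisymm ?_ (le_of_quantile_le hf1 hu.2 le_rfl)
  have hleft : Tendsto f (𝓝[<] quantile f u) (𝓝 (f (quantile f u))) :=
    hf.continuousAt.tendsto.mono_left nhdsWithin_le_nhds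
  refine le_of_tendsto hleft ?_
  filter_upwards [self_mem_nhdsWithin] with z (hz : z < quantile f u)
  exact le_of_not_gt fun h => (quantile_le_of_lt hf0 hu.1 h).not_gt hz

end Quantile

lemma aemeasurable_quantile_cdf (μ : Measure ℝ) :
    AEMeasurable (quantile (cdf μ)) (volume.restrict (Ioo 0 1)) :=
  aemeasurable_restrict_of_monotoneOn measurableSet_Ioo
    (monotoneOn_quantile (tendsto_cdf_atBot μ) (tendsto_cdf_atTop μ))

variable (μ : Measure ℝ) [IsProbabilityMeasure μ]

theorem map_quantile_cdf : (volume.restrict (Ioo 0 1)).map (quantile (cdf μ)) = μ := by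
  refine Measure.ext_of_Iic _ _ fun x => ?_
  rw [Measure.map_apply_of_aemeasurable (aemeasurable_quantile_cdf μ) measurableSet_Iic,
    Measure.restrict_apply' measurableSet_Ioo, ← ofReal_cdf]
  have hlower : Ioo 0 (cdf μ x) ⊆ quantile (cdf μ) ⁻¹' Iic x ∩ Ioo 0 1 := fun u hu =>
    ⟨quantile_le_of_lt (tendsto_cdf_atBot μ) hu.1 hu.2, hu.1, hu.2.trans_le (cdf_le_one μ x)⟩
  have hupper : quantile (cdf μ) ⁻¹' Iic x ∩ Ioo 0 1 ⊆ Ioc 0 (cdf μ x) := fun u hu =>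
    ⟨hu.2.1, le_of_quantile_le (tendsto_cdf_atTop μ) hu.2.2 hu.1⟩
  refine le_antisymm ?_ ?_
  · simpa using measure_mono (μ := volume) hupper
  · simpa using measure_mono (μ := volume) hlower

lemma continuous_cdf [NullSingletonClass μ] : Continuous (cdf μ) := by
  refine continuous_iff_continuousAt.2 fun a => continuousAt_iff_continuous_left'_right'.2
    ⟨(monotone_cdf μ).continuousWithinAt_Iio_iff_leftLim_eq.2 ?_,
      ((cdf μ).right_continuous a).mono Ioi_subset_Ici_self⟩
  have hjump : ENNReal.ofReal (cdf μ a - Function.leftLim (cdf μ) a) = 0 := by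
    rw [← StieltjesFunction.measure_singleton, measure_cdf, measure_singleton]
  exact le_antisymm ((monotone_cdf μ).leftLim_le le_rfl)
    (sub_nonpos.1 (ENNReal.ofReal_eq_zero.1 hjump))

theorem map_cdf [NullSingletonClass μ] : μ.map (cdf μ) = volume.restrict (Ioo 0 1) := by
  conv_lhs => arg 2; rw [← map_quantile_cdf μ]
  rw [AEMeasurable.map_map_of_aemeasurable (monotone_cdf μ).measurable.aemeasurable
    (aemeasurable_quantile_cdf μ)]
  have hid : cdf μ ∘ quantile (cdf μ) =ᵐ[volume.restrict (Ioo 0 1)] id :=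
    ae_restrict_of_forall_mem measurableSet_Ioo fun u hu =>
      apply_quantile (continuous_cdf μ) (tendsto_cdf_atBot μ) (tendsto_cdf_atTop μ) hu
  rw [Measure.map_congr hid, Measure.map_id]

/-- One-dimensional monotone transport: `T = G⁻¹ ∘ F` pushes the atomless measure `μ`
with CDF `F` onto the measure `ν` with CDF `G`. -/
theorem monotone_transport_pushforward (μ ν : Measure ℝ)
    [IsProbabilityMeasure μ] [IsProbabilityMeasure ν] [NullSingletonClass μ]
    (F G : ℝ → ℝ) (hF : ∀ x, F x = (μ (Iic x)).toReal) (hG : ∀ x, G x = (ν (Iic x)).toReal)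
    (Ginv : ℝ → ℝ) (hGinv : ∀ u, Ginv u = sInf {z : ℝ | G z > u}) :
    μ.map (Ginv ∘ F) = ν := by
  obtain rfl : F = cdf μ := funext fun x => by rw [hF, cdf_eq_real, measureReal_def]
  obtain rfl : G = cdf ν := funext fun x => by rw [hG, cdf_eq_real, measureReal_def]
  obtain rfl : Ginv = quantile (cdf ν) := funext hGinv
  rw [← AEMeasurable.map_map_of_aemeasurable (by rw [map_cdf]; exact aemeasurable_quantile_cdf ν)
    (monotone_cdf μ).measurable.aemeasurable, map_cdf, map_quantile_cdf]
end

section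
/- For probability measures μ, ν on ℝ with CDFs F, G, the monotone map T = G⁻¹ ∘ F is an optimal transport map for the quadratic cost: among all maps S with S_#μ = ν, T minimizes ∫ |x - S(x)|² dμ(x), assuming μ is atomless and all integrals are finite. -/
/-!
Since `((x - s)² - (x - t)²) / 2 = ∫_t^s (y - x) dy`, Fubini turns the difference of the two
costs into `∫ dy ∫ (y - x) (1_A - 1_B) dμ(x)` with `A = {T < y ≤ S}` and `B = {S < y ≤ T}`.
Because `T` and `S` push `μ` to the same law, `μ {T < y} = μ {S < y}` and hence `μ A = μ B`;
because `T` is monotone, `A` lies to the left of `B`. As `y - x` is decreasing in `x`, its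
integral over `A` dominates that over `B`, so the inner integral is nonnegative for every `y`.

That `T = G⁻¹ ∘ F` is monotone and pushes `μ` to `ν` follows from the sandwich
`{F < G y} ⊆ {T ≤ y} ⊆ {F ≤ G y}`: for continuous strictly increasing `F` both outer sets have
`μ`-measure `G y`.
-/

open MeasureTheory ProbabilityTheory Set Filter Topology
open scoped Interval

namespace ProbabilityTheory

-- Outside `0 < u < 1` the set is unbounded below or empty, so `sInf` returns a junk value.
noncomputable def quantile (ν : Measure ℝ) (u : ℝ) : ℝ := sInf {z | u < cdf ν z}

section Quantile

variable {ν : Measure ℝ} {u y : ℝ}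

theorem bddBelow_setOf_lt_cdf (hu : 0 < u) : BddBelow {z | u < cdf ν z} := by
  obtain ⟨z₀, hz₀⟩ := ((tendsto_cdf_atBot ν).eventually_lt_const hu).exists_forall_of_atBot
  exact ⟨z₀, fun z hz => not_lt.mp fun hlt => (hz₀ z hlt.le).asymm hz⟩

theorem nonempty_setOf_lt_cdf (hu : u < 1) : {z | u < cdf ν z}.Nonempty :=
  ((tendsto_cdf_atTop ν).eventually_const_lt hu).exists

theorem quantile_le_of_lt_cdf (hu : 0 < u) (h : u < cdf ν y) : quantile ν u ≤ y :=
  csInf_le (bddBelow_setOf_lt_cdf hu) h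

theorem le_cdf_of_quantile_le (hu : u < 1) (h : quantile ν u ≤ y) : u ≤ cdf ν y := by
  have hright : ∀ z > y, u ≤ cdf ν z := fun z hz => by
    obtain ⟨w, hw, hwz⟩ := exists_lt_of_csInf_lt (nonempty_setOf_lt_cdf hu) (h.trans_lt hz)
    exact hw.le.trans (monotone_cdf ν hwz.le)
  exact ge_of_tendsto (((cdf ν).right_continuous y).mono Ioi_subset_Ici_self).tendsto
    (eventually_nhdsWithin_of_forall hright)

theorem quantile_mono {v : ℝ} (hu : 0 < u) (hv : v < 1) (huv : u ≤ v) :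
    quantile ν u ≤ quantile ν v :=
  csInf_le_csInf (bddBelow_setOf_lt_cdf hu) (nonempty_setOf_lt_cdf hv) fun _ hz =>
    huv.trans_lt hz

end Quantile

theorem cdf_mem_Ioo_of_strictMono {μ : Measure ℝ} (hm : StrictMono (cdf μ)) (x : ℝ) :
    cdf μ x ∈ Ioo 0 1 :=
  ⟨(cdf_nonneg μ (x - 1)).trans_lt (hm (sub_one_lt x)),
    (hm (lt_add_one x)).trans_le (cdf_le_one μ (x + 1))⟩

section ContinuousCDF

variable {μ : Measure ℝ} [IsProbabilityMeasure μ]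

theorem nullSingletonClass_of_continuous_cdf (hc : Continuous (cdf μ)) :
    NullSingletonClass μ := by
  refine ⟨fun x => ?_⟩
  rw [← measure_cdf μ, StieltjesFunction.measure_singleton,
    hc.continuousWithinAt.leftLim_eq, sub_self, ENNReal.ofReal_zero]

theorem measure_cdf_lt (hc : Continuous (cdf μ)) (hm : StrictMono (cdf μ)) {u : ℝ}
    (hu : u ∈ Icc 0 1) : μ {x | cdf μ x < u} = ENNReal.ofReal u := by
  have := nullSingletonClass_of_continuous_cdf hc
  rcases hu.1.eq_or_lt with rfl | hu0
  · simp [not_lt.mpr (cdf_nonneg μ _)]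
  rcases hu.2.eq_or_lt with rfl | hu1
  · simp [(cdf_mem_Ioo_of_strictMono hm _).2]
  obtain ⟨x₀, rfl⟩ : u ∈ range (cdf μ) := mem_range_of_exists_le_of_exists_ge hc
    (((tendsto_cdf_atBot μ).eventually_lt_const hu0).exists.imp fun _ => le_of_lt)
    (((tendsto_cdf_atTop μ).eventually_const_lt hu1).exists.imp fun _ => le_of_lt)
  have hIio : {x | cdf μ x < cdf μ x₀} = Iio x₀ := by ext; simp [hm.lt_iff_lt]
  rw [hIio, measure_congr Iio_ae_eq_Iic, ofReal_cdf]

theorem measure_cdf_le (hc : Continuous (cdf μ)) (hm : StrictMono (cdf μ)) {u : ℝ}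
    (hu : u ∈ Icc 0 1) : μ {x | cdf μ x ≤ u} = ENNReal.ofReal u := by
  have := nullSingletonClass_of_continuous_cdf hc
  refine le_antisymm ?_ (measure_cdf_lt hc hm hu ▸ measure_mono fun x (hx : cdf μ x < u) => hx.le)
  calc μ {x | cdf μ x ≤ u} ≤ μ ({x | cdf μ x < u} ∪ {x | cdf μ x = u}) :=
        measure_mono fun x (hx : cdf μ x ≤ u) => hx.lt_or_eq
    _ ≤ μ {x | cdf μ x < u} + μ {x | cdf μ x = u} := measure_union_le _ _
    _ = ENNReal.ofReal u := by
        rw [measure_cdf_lt hc hm hu,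
          Subsingleton.measure_zero (fun a ha b hb => hm.injective (ha.trans hb.symm)), add_zero]

end ContinuousCDF

theorem monotone_quantile_comp_cdf {μ ν : Measure ℝ} (hm : StrictMono (cdf μ)) :
    Monotone (quantile ν ∘ cdf μ) := fun x x' hxx' =>
  quantile_mono (cdf_mem_Ioo_of_strictMono hm x).1 (cdf_mem_Ioo_of_strictMono hm x').2
    (hm.monotone hxx')

theorem map_quantile_comp_cdf {μ ν : Measure ℝ} [IsProbabilityMeasure μ] [IsProbabilityMeasure ν]
    (hc : Continuous (cdf μ)) (hm : StrictMono (cdf μ)) : μ.map (quantile ν ∘ cdf μ) = ν := by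
  have hT := (monotone_quantile_comp_cdf (ν := ν) hm).measurable
  refine Measure.ext_of_Iic _ _ fun y => ?_
  have hG : cdf ν y ∈ Icc 0 1 := ⟨cdf_nonneg ν y, cdf_le_one ν y⟩
  rw [Measure.map_apply hT measurableSet_Iic, ← ofReal_cdf]
  refine le_antisymm ?_ ?_
  · rw [← measure_cdf_le hc hm hG]
    exact measure_mono fun x hx => le_cdf_of_quantile_le (cdf_mem_Ioo_of_strictMono hm x).2 hx
  · rw [← measure_cdf_lt hc hm hG]
    exact measure_mono fun x hx => quantile_le_of_lt_cdf (cdf_mem_Ioo_of_strictMono hm x).1 hx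

end ProbabilityTheory

theorem Antitone.setIntegral_le_of_forall_le_of_measure_eq {α : Type*}
    [ConditionallyCompleteLinearOrder α] [MeasurableSpace α] {μ : Measure α} {A B : Set α}
    {h : α → ℝ} (hh : Antitone h) (hA : MeasurableSet A) (hB : MeasurableSet B)
    (hAB : ∀ a ∈ A, ∀ b ∈ B, a ≤ b) (hμ : μ A = μ B) (hμA : μ A ≠ ⊤)
    (hhA : IntegrableOn h A μ) (hhB : IntegrableOn h B μ) :
    ∫ x in B, h x ∂μ ≤ ∫ x in A, h x ∂μ := by
  rcases A.eq_empty_or_nonempty with rfl | ⟨a, ha⟩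
  · simp [Measure.restrict_eq_zero.mpr (hμ.symm.trans measure_empty)]
  rcases B.eq_empty_or_nonempty with rfl | ⟨b, hb⟩
  · simp [Measure.restrict_eq_zero.mpr (hμ.trans measure_empty)]
  have hA_bdd : BddAbove A := ⟨b, fun a ha => hAB a ha b hb⟩
  calc ∫ x in B, h x ∂μ ≤ ∫ _ in B, h (sSup A) ∂μ :=
        setIntegral_mono_on hhB (integrableOn_const (hμ ▸ hμA)) hB fun x hx =>
          hh (csSup_le ⟨a, ha⟩ fun a ha => hAB a ha x hx)
    _ = ∫ _ in A, h (sSup A) ∂μ := by simp only [setIntegral_const, measureReal_def, hμ]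
    _ ≤ ∫ x in A, h x ∂μ :=
        setIntegral_mono_on (integrableOn_const hμA) hhA hA fun x hx => hh (le_csSup hA_bdd hx)

theorem abs_sub_le_of_mem_uIcc {a b x y : ℝ} (hy : y ∈ uIcc a b) :
    |y - x| ≤ |x - a| + |x - b| := by
  rcases mem_uIcc.mp hy with ⟨h₁, h₂⟩ | ⟨h₁, h₂⟩ <;>
  · rw [abs_le]
    constructor <;> linarith [le_abs_self (x - a), neg_abs_le (x - a), le_abs_self (x - b),
      neg_abs_le (x - b), abs_nonneg (x - a), abs_nonneg (x - b)]

noncomputable def quadraticLayer (t s x y : ℝ) : ℝ :=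
  (Ioc t s).indicator (fun y => y - x) y - (Ioc s t).indicator (fun y => y - x) y

theorem integrable_indicator_Ioc_sub (a b x : ℝ) :
    Integrable ((Ioc a b).indicator fun y : ℝ => y - x) :=
  (continuous_id.sub continuous_const).integrableOn_Ioc.integrable_indicator measurableSet_Ioc

theorem integrable_quadraticLayer (t s x : ℝ) : Integrable (quadraticLayer t s x) :=
  (integrable_indicator_Ioc_sub t s x).sub (integrable_indicator_Ioc_sub s t x)

theorem integral_quadraticLayer (t s x : ℝ) :
    ∫ y, quadraticLayer t s x y = ((x - s) ^ 2 - (x - t) ^ 2) / 2 := by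
  calc ∫ y, quadraticLayer t s x y = ∫ y in t..s, (y - x) := by
        rw [intervalIntegral, ← integral_indicator measurableSet_Ioc,
          ← integral_indicator measurableSet_Ioc, ← integral_sub (integrable_indicator_Ioc_sub t s x)
          (integrable_indicator_Ioc_sub s t x)]
        rfl
    _ = _ := by
        rw [intervalIntegral.integral_comp_sub_right (fun y => y), integral_id]
        ring

theorem norm_quadraticLayer (t s x y : ℝ) :
    ‖quadraticLayer t s x y‖ = (Ι t s).indicator (fun y => |y - x|) y := by
  rcases le_total t s with h | h
  · simp [quadraticLayer, Ioc_eq_empty_of_le h, uIoc_of_le h, norm_indicator_eq_indicator_norm]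
  · simp [quadraticLayer, Ioc_eq_empty_of_le h, uIoc_of_ge h, norm_indicator_eq_indicator_norm]

theorem integral_norm_quadraticLayer_le (t s x : ℝ) :
    ∫ y, ‖quadraticLayer t s x y‖ ≤ 2 * ((x - t) ^ 2 + (x - s) ^ 2) := by
  simp_rw [norm_quadraticLayer]
  rw [integral_indicator measurableSet_uIoc]
  calc ∫ y in Ι t s, |y - x| ≤ ‖∫ y in Ι t s, |y - x|‖ := Real.le_norm_self _
    _ ≤ (|x - t| + |x - s|) * volume.real (Ι t s) :=
        norm_setIntegral_le_of_norm_le_const (by simp [Real.volume_uIoc]) fun y hy => by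
          simpa using abs_sub_le_of_mem_uIcc (x := x) (uIoc_subset_uIcc hy)
    _ ≤ (|x - t| + |x - s|) * (|x - t| + |x - s|) := by
        gcongr
        rw [measureReal_def, Real.volume_uIoc, ENNReal.toReal_ofReal (abs_nonneg _)]
        linarith [abs_sub_le s x t, abs_sub_comm s x]
    _ ≤ 2 * ((x - t) ^ 2 + (x - s) ^ 2) := by
        nlinarith [sq_abs (x - t), sq_abs (x - s), sq_nonneg (|x - t| - |x - s|)]

theorem quadraticLayer_eq_indicator_sub_indicator (T S : ℝ → ℝ) (x y : ℝ) :
    quadraticLayer (T x) (S x) x y =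
      ((T ⁻¹' Iio y) \ (S ⁻¹' Iio y)).indicator (fun x => y - x) x -
        ((S ⁻¹' Iio y) \ (T ⁻¹' Iio y)).indicator (fun x => y - x) x := by
  by_cases hT : T x < y <;> by_cases hS : S x < y <;>
    simp [quadraticLayer, hT, hS, not_lt.mp]

theorem integrableOn_const_sub_of_mem_uIcc {μ : Measure ℝ} {T S : ℝ → ℝ} {C : Set ℝ} {y : ℝ}
    (hT : Integrable (fun x => x - T x) μ) (hS : Integrable (fun x => x - S x) μ)
    (hC : MeasurableSet C) (hy : ∀ x ∈ C, y ∈ uIcc (T x) (S x)) :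
    IntegrableOn (fun x => y - x) C μ :=
  (hT.abs.add hS.abs).integrableOn.mono' (by fun_prop) <|
    (ae_restrict_iff' hC).mpr <| ae_of_all _ fun x hx => by
      simpa [abs_sub_comm] using abs_sub_le_of_mem_uIcc (x := x) (hy x hx)

theorem integral_quadraticLayer_nonneg {μ : Measure ℝ} [IsFiniteMeasure μ] {T S : ℝ → ℝ}
    (hTmono : Monotone T) (hS : Measurable S) (hmap : μ.map T = μ.map S)
    (hTi : Integrable (fun x => x - T x) μ) (hSi : Integrable (fun x => x - S x) μ) (y : ℝ) :
    0 ≤ ∫ x, quadraticLayer (T x) (S x) x y ∂μ := by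
  have hT := hTmono.measurable
  set L := T ⁻¹' Iio y
  set K := S ⁻¹' Iio y
  have hL : MeasurableSet L := hT measurableSet_Iio
  have hK : MeasurableSet K := hS measurableSet_Iio
  have hLK : μ L = μ K := by
    rw [← Measure.map_apply hT measurableSet_Iio, hmap, Measure.map_apply hS measurableSet_Iio]
  have hA := integrableOn_const_sub_of_mem_uIcc hTi hSi (hL.diff hK) fun x hx =>
    Icc_subset_uIcc ⟨le_of_lt hx.1, not_lt.mp hx.2⟩
  have hB := integrableOn_const_sub_of_mem_uIcc hTi hSi (hK.diff hL) fun x hx =>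
    Icc_subset_uIcc' ⟨le_of_lt hx.1, not_lt.mp hx.2⟩
  simp_rw [quadraticLayer_eq_indicator_sub_indicator]
  rw [integral_sub (hA.integrable_indicator (hL.diff hK)) (hB.integrable_indicator (hK.diff hL)),
    integral_indicator (hL.diff hK), integral_indicator (hK.diff hL), sub_nonneg]
  refine Antitone.setIntegral_le_of_forall_le_of_measure_eq (fun _ _ hab => sub_le_sub_left hab y)
    (hL.diff hK) (hK.diff hL) (fun a ha b hb => ?_)
    (measure_sdiff_symm hL.nullMeasurableSet hK.nullMeasurableSet hLK (measure_ne_top μ _))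
    (measure_ne_top μ _) hA hB
  exact (hTmono.reflect_lt (ha.1.trans_le (not_lt.mp hb.2))).le

theorem integrable_quadraticLayer_prod {μ : Measure ℝ} [SFinite μ] {T S : ℝ → ℝ}
    (hT : Measurable T) (hS : Measurable S)
    (hTi : Integrable (fun x => (x - T x) ^ 2) μ) (hSi : Integrable (fun x => (x - S x) ^ 2) μ) :
    Integrable (fun p : ℝ × ℝ => quadraticLayer (T p.1) (S p.1) p.1 p.2) (μ.prod volume) := by
  have hIoc : ∀ {f g : ℝ → ℝ}, Measurable f → Measurable g →
      Measurable fun p : ℝ × ℝ => (Ioc (f p.1) (g p.1)).indicator (fun y => y - p.1) p.2 :=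
    fun hf hg => by
      simp only [indicator_apply, mem_Ioc]
      exact Measurable.ite ((measurableSet_lt (by fun_prop) measurable_snd).inter
        (measurableSet_le measurable_snd (by fun_prop))) (by fun_prop) measurable_const
  have hmeas : Measurable fun p : ℝ × ℝ => quadraticLayer (T p.1) (S p.1) p.1 p.2 :=
    (hIoc hT hS).sub (hIoc hS hT)
  rw [integrable_prod_iff hmeas.aestronglyMeasurable]
  refine ⟨ae_of_all _ fun x => integrable_quadraticLayer (T x) (S x) x,
    ((hTi.add hSi).const_mul 2).mono' hmeas.norm.aestronglyMeasurable.integral_prod_right'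
      (ae_of_all _ fun x => ?_)⟩
  rw [Real.norm_of_nonneg (integral_nonneg fun _ => norm_nonneg _)]
  exact integral_norm_quadraticLayer_le (T x) (S x) x

theorem integral_sq_sub_le_of_monotone {μ : Measure ℝ} [IsFiniteMeasure μ] {T S : ℝ → ℝ}
    (hTmono : Monotone T) (hS : Measurable S) (hmap : μ.map T = μ.map S)
    (hTi : Integrable (fun x => (x - T x) ^ 2) μ) (hSi : Integrable (fun x => (x - S x) ^ 2) μ) :
    ∫ x, (x - T x) ^ 2 ∂μ ≤ ∫ x, (x - S x) ^ 2 ∂μ := by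
  have hT := hTmono.measurable
  have integrable_sub : ∀ {R : ℝ → ℝ}, Measurable R → Integrable (fun x => (x - R x) ^ 2) μ →
      Integrable (fun x => x - R x) μ := fun hR hRi =>
    ((memLp_two_iff_integrable_sq (by fun_prop)).mpr hRi).integrable one_le_two
  have half_diff_nonneg : 0 ≤ ∫ x, ((x - S x) ^ 2 - (x - T x) ^ 2) / 2 ∂μ := calc
    0 ≤ ∫ y, ∫ x, quadraticLayer (T x) (S x) x y ∂μ :=
        integral_nonneg <| integral_quadraticLayer_nonneg hTmono hS hmap
          (integrable_sub hT hTi) (integrable_sub hS hSi)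
    _ = ∫ x, ∫ y, quadraticLayer (T x) (S x) x y ∂volume ∂μ :=
        (integral_integral_swap (integrable_quadraticLayer_prod hT hS hTi hSi)).symm
    _ = _ := by simp_rw [integral_quadraticLayer]
  rw [integral_div, integral_sub hSi hTi] at half_diff_nonneg
  linarith

/-- Optimality of the monotone map for the quadratic cost: among all maps `S` pushing
`μ` to `ν`, the map `T = G⁻¹ ∘ F` minimizes `∫ |x - S x|² dμ`. -/
theorem monotone_transport_optimal (μ ν : Measure ℝ)
    [IsProbabilityMeasure μ] [IsProbabilityMeasure ν]
    (F G : ℝ → ℝ) (hF : ∀ x, F x = (μ (Iic x)).toReal) (hG : ∀ x, G x = (ν (Iic x)).toReal)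
    (hFc : Continuous F) (hFm : StrictMono F)
    (Ginv : ℝ → ℝ) (hGinv : ∀ u, Ginv u = sInf {z : ℝ | G z > u})
    (T : ℝ → ℝ) (hT : T = Ginv ∘ F)
    (hTint : Integrable (fun x => (x - T x) ^ 2) μ) :
    ∀ S : ℝ → ℝ, Measurable S → μ.map S = ν →
      Integrable (fun x => (x - S x) ^ 2) μ →
      ∫ x, (x - T x) ^ 2 ∂μ ≤ ∫ x, (x - S x) ^ 2 ∂μ := by
  obtain rfl : F = cdf μ := funext fun x => by rw [hF, cdf_eq_real, measureReal_def]
  obtain rfl : G = cdf ν := funext fun x => by rw [hG, cdf_eq_real, measureReal_def]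
  obtain rfl : Ginv = quantile ν := funext hGinv
  subst hT
  intro S hS hSν hSi
  exact integral_sq_sub_le_of_monotone (monotone_quantile_comp_cdf hFm) hS
    ((map_quantile_comp_cdf hFc hFm).trans hSν.symm) hTint hSi
end
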